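/- arXiv:1812.02118 — 5 statements merged into one kernel-verified Lean document; each statement's English description precedes it below -/
import Mathlib

section
/- Let k be a field, R a commutative k-algebra, and π : N₁ → N₂ a surjective R-linear map, where N₁ is a weight module (N₁ equals the sum of its weight spaces). Then for every weight φ of R and every w ∈ N₂ with r • w = φ(r) • w for all r ∈ R, there exists v ∈ N₁ with r • v = φ(r) • v for all r ∈ R and π(v) = w; i.e. π maps N₁(φ) onto N₂(φ). (This is the content of the statement that the one-dimensional module k_φ = R / ker φ, on which every element has weight φ, is a projective object in the category of weight R-modules.) -/
/-- The weight space of an `R`-module `M` (with compatible `k`-action) attached to a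
weight `φ : R →ₐ[k] k`: the set of `m ∈ M` such that `r • m = φ r • m` for all `r`. -/
def weightSpace {k R M : Type*} [Field k] [CommRing R] [Algebra k R]
    [AddCommGroup M] [Module k M] [Module R M] [IsScalarTower k R M]
    (φ : R →ₐ[k] k) : Submodule k M where
  carrier := {m | ∀ r : R, r • m = φ r • m}
  add_mem' := by
    intro a b ha hb r
    simp only [smul_add, ha r, hb r]
  zero_mem' := by intro r; simp
  smul_mem' := by
    intro c m hm r
    calc r • (c • m) = r • ((algebraMap k R c) • m) := by rw [algebraMap_smul]
      _ = (r * algebraMap k R c) • m := (mul_smul _ _ _).symm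
      _ = ((algebraMap k R c) * r) • m := by rw [mul_comm]
      _ = (algebraMap k R c) • (r • m) := mul_smul _ _ _
      _ = c • (r • m) := by rw [algebraMap_smul]
      _ = c • (φ r • m) := by rw [hm r]
      _ = φ r • (c • m) := smul_comm c (φ r) m

/-! Weight spaces for distinct weights are independent, being contained in the simultaneous
generalised eigenspaces of the commuting operators `r • ·`. The images `π(N₁(ψ))` lie in
`N₂(ψ)` and, since `N₁` is a weight module and `π` is onto, they span `N₂`. In the modular
lattice of subspaces, a family sitting inside an independent family and spanning the whole
space must coincide with it, so `π(N₁(φ)) = N₂(φ)`. -/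

theorem iSupIndep.eq_of_le_of_iSup_eq_top {ι α : Type*} [CompleteLattice α] [IsModularLattice α]
    {a b : ι → α} (hb : iSupIndep b) (hab : ∀ i, a i ≤ b i) (ha : ⨆ i, a i = ⊤) (i : ι) :
    a i = b i := by
  have hdisj : b i ⊓ ⨆ (j) (_ : j ≠ i), a j = ⊥ :=
    (hb i).mono_right (iSup₂_mono fun j _ => hab j) |>.eq_bot
  calc a i = a i ⊔ b i ⊓ ⨆ (j) (_ : j ≠ i), a j := by rw [hdisj, sup_bot_eq]
    _ = (a i ⊔ ⨆ (j) (_ : j ≠ i), a j) ⊓ b i := by rw [inf_comm, sup_inf_assoc_of_le _ (hab i)]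
    _ = b i := by rw [← iSup_split_single, ha, top_inf_eq]

section weightSpace

open Module.End

variable {k R M : Type*} [Field k] [CommRing R] [Algebra k R]
    [AddCommGroup M] [Module k M] [Module R M] [IsScalarTower k R M]

theorem weightSpace_le_iInf_maxGenEigenspace (φ : R →ₐ[k] k) :
    weightSpace φ ≤ ⨅ r : R, maxGenEigenspace (DistribSMul.toLinearMap k M r) (φ r) :=
  le_iInf fun r =>
    le_trans (fun _ hm => mem_eigenspace_iff.mpr (hm r)) eigenspace_le_maxGenEigenspace

theorem weightSpace_iSupIndep :
    iSupIndep fun φ : R →ₐ[k] k => (weightSpace φ : Submodule k M) :=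
  ((independent_iInf_maxGenEigenspace_of_forall_mapsTo _ fun r s μ =>
      mapsTo_maxGenEigenspace_of_comm (LinearMap.ext fun m => smul_comm s r m) μ).comp
    DFunLike.coe_injective).mono weightSpace_le_iInf_maxGenEigenspace

theorem map_weightSpace_le {N : Type*} [AddCommGroup N] [Module k N] [Module R N]
    [IsScalarTower k R N] (f : M →ₗ[R] N) (φ : R →ₐ[k] k) :
    (weightSpace φ).map (f.restrictScalars k) ≤ weightSpace φ := by
  rintro _ ⟨m, hm, rfl⟩ r
  rw [LinearMap.restrictScalars_apply, ← map_smul, hm r, LinearMap.map_smul_of_tower]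

theorem map_weightSpace_eq_of_surjective {N : Type*} [AddCommGroup N] [Module k N] [Module R N]
    [IsScalarTower k R N] (f : M →ₗ[R] N) (hf : Function.Surjective f)
    (hM : ⨆ φ : R →ₐ[k] k, (weightSpace φ : Submodule k M) = ⊤) (φ : R →ₐ[k] k) :
    (weightSpace φ).map (f.restrictScalars k) = weightSpace φ := by
  refine weightSpace_iSupIndep.eq_of_le_of_iSup_eq_top (map_weightSpace_le f) ?_ φ
  rw [← Submodule.map_iSup, hM, Submodule.map_top, LinearMap.range_eq_top]
  exact hf

end weightSpace

/-- Lemma 1.3.1 (projectivity of `k_φ` in the category of weight `R`-modules): a surjective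
`R`-linear map from a weight module maps each weight space onto the corresponding weight
space of the target. -/
theorem weight_vector_lifts_of_surjective {k R N₁ N₂ : Type*} [Field k] [CommRing R]
    [Algebra k R]
    [AddCommGroup N₁] [Module k N₁] [Module R N₁] [IsScalarTower k R N₁]
    [AddCommGroup N₂] [Module k N₂] [Module R N₂] [IsScalarTower k R N₂]
    (π : N₁ →ₗ[R] N₂) (hπ : Function.Surjective π)
    (hN₁ : (⨆ φ : R →ₐ[k] k, (weightSpace φ : Submodule k N₁)) = ⊤) :
    ∀ (φ : R →ₐ[k] k) (w : N₂), (∀ r : R, r • w = φ r • w) →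
      ∃ v : N₁, (∀ r : R, r • v = φ r • v) ∧ π v = w := by
  intro φ w hw
  obtain ⟨v, hv, rfl⟩ : w ∈ (weightSpace φ).map (π.restrictScalars k) := by
    rwa [map_weightSpace_eq_of_surjective π hπ hN₁]
  exact ⟨v, hv, rfl⟩
end

section
/- Let k be a field, and let A₁, A₂ be associative unital k-algebras with commutative k-subalgebras R₁ ⊆ A₁ and R₂ ⊆ A₂. For i = 1, 2 let S_i be a simple left A_i-module which, as an R_i-module, equals the sum of its weight spaces, and such that every weight space S_i(φ), φ : R_i →ₐ[k] k, has k-dimension at most 1. Then the tensor product S₁ ⊗[k] S₂, with its natural A₁ ⊗[k] A₂-module structure given by (a₁ ⊗ a₂) • (s₁ ⊗ s₂) = (a₁ • s₁) ⊗ (a₂ • s₂), is a simple A₁ ⊗[k] A₂-module. (This is the two-factor case of the statement for an n-fold tensor product.) -/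
/-- The weight space attached to a weight `φ : R →ₐ[k] k` of a commutative subalgebra
`R` of `A`, inside an `A`-module `M` (made an `R`-module by restriction of scalars). -/
def subWeightSpace {k A M : Type*} [Field k] [Ring A] [Algebra k A]
    [AddCommGroup M] [Module A M] [Module k M] [IsScalarTower k A M]
    {R : Subalgebra k A} (φ : R →ₐ[k] k) : Submodule k M where
  carrier := {m | ∀ r : R, (r : A) • m = φ r • m}
  add_mem' := by intro a b ha hb r; simp only [smul_add, ha r, hb r]
  zero_mem' := by intro r; simp
  smul_mem' := by
    intro c m hm r
    calc (r : A) • (c • m) = (r : A) • ((algebraMap k A c) • m) := by rw [algebraMap_smul]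
      _ = ((r : A) * algebraMap k A c) • m := (mul_smul _ _ _).symm
      _ = ((algebraMap k A c) * (r : A)) • m := by rw [← Algebra.commutes]
      _ = (algebraMap k A c) • ((r : A) • m) := mul_smul _ _ _
      _ = c • ((r : A) • m) := by rw [algebraMap_smul]
      _ = c • (φ r • m) := by rw [hm r]
      _ = φ r • (c • m) := smul_comm c (φ r) m

open TensorProduct in
/-- The natural `A₁ ⊗[k] A₂`-module structure on `S₁ ⊗[k] S₂`, with
`(a₁ ⊗ a₂) • (s₁ ⊗ s₂) = (a₁ • s₁) ⊗ (a₂ • s₂)`. -/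
noncomputable instance tensorTensorModule {k A₁ A₂ S₁ S₂ : Type*} [Field k]
    [Ring A₁] [Algebra k A₁] [Ring A₂] [Algebra k A₂]
    [AddCommGroup S₁] [Module A₁ S₁] [Module k S₁] [IsScalarTower k A₁ S₁]
    [AddCommGroup S₂] [Module A₂ S₂] [Module k S₂] [IsScalarTower k A₂ S₂] :
    Module (A₁ ⊗[k] A₂) (S₁ ⊗[k] S₂) :=
  haveI : SMulCommClass A₁ k S₁ := SMulCommClass.symm _ _ _
  haveI : SMulCommClass A₂ k S₂ := SMulCommClass.symm _ _ _
  Module.compHom _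
    ((Module.endTensorEndAlgHom (R := k) (S := k) (A := k) (M := S₁) (N := S₂)).comp
      (Algebra.TensorProduct.map
        (Algebra.lsmul k k S₁ (A := A₁)) (Algebra.lsmul k k S₂ (A := A₂)))).toRingHom

/-! Choose in each weight space of `S₁` a spanning vector `e φ`. Every element of `S₁ ⊗ S₂` is
then a finite sum `∑ e φ ⊗ w φ` of simultaneous eigenvectors of the operators `r ⊗ 1`, `r ∈ R₁`,
for pairwise distinct characters `φ`, and a subspace stable under these operators contains each
summand of its elements. Hence a nonzero submodule contains a pure tensor `v ⊗ w` with `v, w ≠ 0`,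
which generates everything because `S₁` and `S₂` are simple. -/

open TensorProduct

theorem Submodule.mem_of_sum_mem_of_apply_eq_smul {k V ι κ : Type*} [Field k] [AddCommGroup V]
    [Module k V] (T : ι → Module.End k V) (χ : κ → ι → k) (hχ : Function.Injective χ)
    (N : Submodule k V) (hN : ∀ i, ∀ v ∈ N, T i v ∈ N) (s : Finset κ) (x : κ → V)
    (hx : ∀ a ∈ s, ∀ i, T i (x a) = χ a i • x a) (hsum : ∑ a ∈ s, x a ∈ N) :
    ∀ a ∈ s, x a ∈ N := by
  classical
  induction s using Finset.induction_on generalizing x with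
  | empty => simp
  | insert a s ha ih =>
    rw [Finset.sum_insert ha] at hsum
    have hx' : ∀ b ∈ s, ∀ i, T i (x b) = χ b i • x b := fun b hb => hx b (by simp [hb])
    have hs : ∀ b ∈ s, x b ∈ N := by
      intro b hb
      obtain ⟨i, hi⟩ : ∃ i, χ b i ≠ χ a i := by
        by_contra! h
        exact ha (hχ (funext h) ▸ hb)
      -- `T i - χ a i` kills `x a` and rescales every other component by a nonzero scalar
      have hTi : T i (x a + ∑ c ∈ s, x c) - χ a i • (x a + ∑ c ∈ s, x c) =
          ∑ c ∈ s, (χ c i - χ a i) • x c := by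
        rw [map_add, map_sum, hx a (Finset.mem_insert_self a s), Finset.sum_congr rfl
          fun c hc => hx' c hc i]
        simp only [sub_smul, Finset.sum_sub_distrib, smul_add, Finset.smul_sum]
        abel
      have hy := ih (fun c => (χ c i - χ a i) • x c)
        (fun c hc j => by rw [map_smul, hx' c hc, smul_comm])
        (hTi ▸ N.sub_mem (hN i _ hsum) (N.smul_mem (χ a i) hsum)) b hb
      simpa [smul_smul, inv_mul_cancel₀ (sub_ne_zero.mpr hi)] using N.smul_mem (χ b i - χ a i)⁻¹ hy
    intro b hb
    rcases Finset.mem_insert.mp hb with rfl | hb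
    · simpa using N.sub_mem hsum (N.sum_mem hs)
    · exact hs b hb

theorem TensorProduct.exists_finsupp_sum_tmul_eq_of_span_eq_top {R M N ι : Type*} [CommRing R]
    [AddCommGroup M] [Module R M] [AddCommGroup N] [Module R N] {e : ι → M}
    (he : Submodule.span R (Set.range e) = ⊤) (t : M ⊗[R] N) :
    ∃ f : ι →₀ N, (f.sum fun i n => e i ⊗ₜ[R] n) = t := by
  induction t using TensorProduct.induction_on with
  | zero => exact ⟨0, Finsupp.sum_zero_index⟩
  | tmul m n =>
    obtain ⟨c, rfl⟩ :=
      Finsupp.mem_span_range_iff_exists_finsupp.mp (he ▸ Submodule.mem_top (x := m))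
    refine ⟨c.mapRange (· • n) (zero_smul R n), ?_⟩
    rw [Finsupp.sum_mapRange_index (fun i => tmul_zero N (e i)), Finsupp.sum, Finsupp.sum,
      sum_tmul]
    simp only [smul_tmul]
  | add x y hx hy =>
    obtain ⟨f, rfl⟩ := hx
    obtain ⟨g, rfl⟩ := hy
    exact ⟨f + g, Finsupp.sum_add_index' (fun i => tmul_zero N (e i)) fun i => tmul_add (e i)⟩

theorem Submodule.exists_span_range_eq_top_of_rank_le_one {k M ι : Type*} [Field k]
    [AddCommGroup M] [Module k M] {W : ι → Submodule k M} (hW : ⨆ i, W i = ⊤)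
    (hrank : ∀ i, Module.rank k (W i) ≤ 1) :
    ∃ e : ι → M, (∀ i, e i ∈ W i) ∧ Submodule.span k (Set.range e) = ⊤ := by
  choose e he hle using fun i => (rank_submodule_le_one_iff (W i)).mp (hrank i)
  refine ⟨e, he, eq_top_iff.mpr (hW ▸ iSup_le fun i => (hle i).trans ?_)⟩
  exact Submodule.span_mono (Set.singleton_subset_iff.mpr (Set.mem_range_self i))

section TensorModule

variable {k A₁ A₂ S₁ S₂ : Type*} [Field k]
    [Ring A₁] [Algebra k A₁] [Ring A₂] [Algebra k A₂]
    [AddCommGroup S₁] [Module A₁ S₁] [Module k S₁] [IsScalarTower k A₁ S₁]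
    [AddCommGroup S₂] [Module A₂ S₂] [Module k S₂] [IsScalarTower k A₂ S₂]

theorem tmul_smul_tmul (a₁ : A₁) (a₂ : A₂) (s₁ : S₁) (s₂ : S₂) :
    (a₁ ⊗ₜ[k] a₂) • (s₁ ⊗ₜ[k] s₂) = (a₁ • s₁) ⊗ₜ[k] (a₂ • s₂) := rfl

instance : IsScalarTower k (A₁ ⊗[k] A₂) (S₁ ⊗[k] S₂) := by
  refine .of_algebraMap_smul fun c x => ?_
  induction x using TensorProduct.induction_on with
  | zero => simp
  | tmul s₁ s₂ =>
    rw [Algebra.TensorProduct.algebraMap_apply, tmul_smul_tmul, algebraMap_smul, one_smul,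
      smul_tmul']
  | add x y hx hy => rw [smul_add, smul_add, hx, hy]

theorem exists_tmul_mem_of_ne_bot {R : Subalgebra k A₁} {e : (R →ₐ[k] k) → S₁}
    (he : ∀ φ, e φ ∈ subWeightSpace φ) (hspan : Submodule.span k (Set.range e) = ⊤)
    {N : Submodule (A₁ ⊗[k] A₂) (S₁ ⊗[k] S₂)} (hN : N ≠ ⊥) :
    ∃ v w, v ≠ 0 ∧ w ≠ 0 ∧ v ⊗ₜ[k] w ∈ N := by
  classical
  obtain ⟨t, htN, ht⟩ := Submodule.exists_mem_ne_zero_of_ne_bot hN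
  obtain ⟨f, rfl⟩ := exists_finsupp_sum_tmul_eq_of_span_eq_top hspan t
  have hmem := Submodule.mem_of_sum_mem_of_apply_eq_smul
    (fun r : R => DistribSMul.toLinearMap k _ ((r : A₁) ⊗ₜ[k] (1 : A₂)))
    (fun φ r => φ r) DFunLike.coe_injective (N.restrictScalars k)
    (fun r _ hv => N.smul_mem ((r : A₁) ⊗ₜ[k] (1 : A₂)) hv)
    f.support (fun φ => e φ ⊗ₜ[k] f φ)
    (fun φ _ r => by
      rw [DistribSMul.toLinearMap_apply, tmul_smul_tmul, one_smul, he φ r, smul_tmul']) htN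
  obtain ⟨φ, hφ, hne⟩ := Finset.exists_ne_zero_of_sum_ne_zero ht
  exact ⟨e φ, f φ, fun h => hne (by simp [h]), fun h => hne (by simp [h]), hmem φ hφ⟩

theorem eq_top_of_tmul_mem [IsSimpleModule A₁ S₁] [IsSimpleModule A₂ S₂]
    {N : Submodule (A₁ ⊗[k] A₂) (S₁ ⊗[k] S₂)} {v : S₁} {w : S₂} (hv : v ≠ 0) (hw : w ≠ 0)
    (hvw : v ⊗ₜ[k] w ∈ N) : N = ⊤ := by
  refine Submodule.eq_top_iff'.mpr fun z => ?_
  induction z using TensorProduct.induction_on with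
  | zero => exact N.zero_mem
  | tmul s₁ s₂ =>
    obtain ⟨a₁, rfl⟩ := IsSimpleModule.toSpanSingleton_surjective A₁ hv s₁
    obtain ⟨a₂, rfl⟩ := IsSimpleModule.toSpanSingleton_surjective A₂ hw s₂
    exact N.smul_mem (a₁ ⊗ₜ[k] a₂) hvw
  | add x y hx hy => exact N.add_mem hx hy

end TensorModule

open TensorProduct in
theorem isSimpleModule_tensorProduct_general {k A₁ A₂ S₁ S₂ : Type*} [Field k]
    [Ring A₁] [Algebra k A₁] [Ring A₂] [Algebra k A₂]
    [AddCommGroup S₁] [Module A₁ S₁] [Module k S₁] [IsScalarTower k A₁ S₁]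
    [AddCommGroup S₂] [Module A₂ S₂] [Module k S₂] [IsScalarTower k A₂ S₂]
    (R₁ : Subalgebra k A₁)
    [IsSimpleModule A₁ S₁] [IsSimpleModule A₂ S₂]
    (hw₁ : (⨆ φ : R₁ →ₐ[k] k, (subWeightSpace (R := R₁) φ : Submodule k S₁)) = ⊤)
    (hd₁ : ∀ φ : R₁ →ₐ[k] k, Module.rank k (subWeightSpace (R := R₁) φ : Submodule k S₁) ≤ 1) :
    IsSimpleModule (A₁ ⊗[k] A₂) (S₁ ⊗[k] S₂) := by
  obtain ⟨e, he, hspan⟩ := Submodule.exists_span_range_eq_top_of_rank_le_one hw₁ hd₁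
  have := IsSimpleModule.nontrivial A₁ S₁
  have := IsSimpleModule.nontrivial A₂ S₂
  refine (isSimpleModule_iff _ _).mpr ⟨fun N => or_iff_not_imp_left.mpr fun hN => ?_⟩
  obtain ⟨v, w, hv, hw, hvw⟩ := exists_tmul_mem_of_ne_bot (A₂ := A₂) he hspan hN
  exact eq_top_of_tmul_mem hv hw hvw

open TensorProduct in
/-- Lemma 1.5.3 (two-factor case): the tensor product of simple weight modules whose weight
spaces are at most one-dimensional is a simple module over the tensor product algebra. -/
theorem isSimpleModule_tensorProduct {k A₁ A₂ S₁ S₂ : Type*} [Field k]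
    [Ring A₁] [Algebra k A₁] [Ring A₂] [Algebra k A₂]
    [AddCommGroup S₁] [Module A₁ S₁] [Module k S₁] [IsScalarTower k A₁ S₁]
    [AddCommGroup S₂] [Module A₂ S₂] [Module k S₂] [IsScalarTower k A₂ S₂]
    (R₁ : Subalgebra k A₁) (hR₁ : ∀ r s : R₁, r * s = s * r)
    (R₂ : Subalgebra k A₂) (hR₂ : ∀ r s : R₂, r * s = s * r)
    [IsSimpleModule A₁ S₁] [IsSimpleModule A₂ S₂]
    (hw₁ : (⨆ φ : R₁ →ₐ[k] k, (subWeightSpace (R := R₁) φ : Submodule k S₁)) = ⊤)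
    (hw₂ : (⨆ φ : R₂ →ₐ[k] k, (subWeightSpace (R := R₂) φ : Submodule k S₂)) = ⊤)
    (hd₁ : ∀ φ : R₁ →ₐ[k] k, Module.rank k (subWeightSpace (R := R₁) φ : Submodule k S₁) ≤ 1)
    (hd₂ : ∀ φ : R₂ →ₐ[k] k, Module.rank k (subWeightSpace (R := R₂) φ : Submodule k S₂) ≤ 1)
    (hsmul : ∀ (a₁ : A₁) (a₂ : A₂) (s₁ : S₁) (s₂ : S₂),
      (a₁ ⊗ₜ[k] a₂) • (s₁ ⊗ₜ[k] s₂) = (a₁ • s₁) ⊗ₜ[k] (a₂ • s₂)) :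
    IsSimpleModule (A₁ ⊗[k] A₂) (S₁ ⊗[k] S₂) :=
  isSimpleModule_tensorProduct_general R₁ hw₁ hd₁
end

section
/- In the Akhavizadegan–Jordan quantized Weyl algebra 𝒜ₙ^{q,Λ}, the elements z_i = x_i y_i − y_i x_i satisfy: z_i x_j = x_j z_i and z_i y_j = y_j z_i for all i ≠ j; q_i · (z_i x_i) = x_i z_i (equivalently z_i x_i = q_i^{-1} x_i z_i) and z_i y_i = q_i · (y_i z_i) for all i; and z_i z_j = z_j z_i for all i, j. In particular each z_i is a normal element of 𝒜ₙ^{q,Λ}. -/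
/-! The Akhavizadegan–Jordan quantized Weyl algebra `𝒜ₙ^{q,Λ}`, realized as a `RingQuot`
of the free algebra on generators `x₁, …, xₙ, y₁, …, yₙ`. -/

/-- `x_i` in the free algebra. -/
def fX (k : Type*) [Field k] (n : ℕ) (i : Fin n) : FreeAlgebra k (Fin n ⊕ Fin n) :=
  FreeAlgebra.ι k (Sum.inl i)

/-- `y_i` in the free algebra. -/
def fY (k : Type*) [Field k] (n : ℕ) (i : Fin n) : FreeAlgebra k (Fin n ⊕ Fin n) :=
  FreeAlgebra.ι k (Sum.inr i)

/-- The defining relations of the Akhavizadegan–Jordan quantized Weyl algebra. -/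
inductive AJRel (k : Type*) [Field k] (n : ℕ) (q : Fin n → k) (Λ : Fin n → Fin n → k) :
    FreeAlgebra k (Fin n ⊕ Fin n) → FreeAlgebra k (Fin n ⊕ Fin n) → Prop
  | xx {i j : Fin n} : i < j →
      AJRel k n q Λ (fX k n i * fX k n j) (Λ i j • (fX k n j * fX k n i))
  | yy {i j : Fin n} : i < j →
      AJRel k n q Λ (fY k n i * fY k n j) (Λ i j • (fY k n j * fY k n i))
  | xy {i j : Fin n} : i < j →
      AJRel k n q Λ (fX k n i * fY k n j) ((Λ i j)⁻¹ • (fY k n j * fX k n i))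
  | yx {i j : Fin n} : i < j →
      AJRel k n q Λ (fY k n i * fX k n j) ((Λ i j)⁻¹ • (fX k n j * fY k n i))
  | xyi (i : Fin n) :
      AJRel k n q Λ (fX k n i * fY k n i) (q i • (fY k n i * fX k n i) + 1)

/-- The Akhavizadegan–Jordan quantized Weyl algebra `𝒜ₙ^{q,Λ}`. -/
abbrev AJWeyl (k : Type*) [Field k] (n : ℕ) (q : Fin n → k) (Λ : Fin n → Fin n → k) :=
  RingQuot (AJRel k n q Λ)

/-- The generator `x_i` of `𝒜ₙ^{q,Λ}`. -/
def ajX (k : Type*) [Field k] (n : ℕ) (q : Fin n → k) (Λ : Fin n → Fin n → k) (i : Fin n) :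
    AJWeyl k n q Λ :=
  RingQuot.mkAlgHom k (AJRel k n q Λ) (fX k n i)

/-- The generator `y_i` of `𝒜ₙ^{q,Λ}`. -/
def ajY (k : Type*) [Field k] (n : ℕ) (q : Fin n → k) (Λ : Fin n → Fin n → k) (i : Fin n) :
    AJWeyl k n q Λ :=
  RingQuot.mkAlgHom k (AJRel k n q Λ) (fY k n i)

/-- The element `z_i = x_i y_i - y_i x_i` of `𝒜ₙ^{q,Λ}`. -/
def ajZ (k : Type*) [Field k] (n : ℕ) (q : Fin n → k) (Λ : Fin n → Fin n → k) (i : Fin n) :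
    AJWeyl k n q Λ :=
  ajX k n q Λ i * ajY k n q Λ i - ajY k n q Λ i * ajX k n q Λ i

/-! For `i ≠ j`, both `x_i y_i` and `y_i x_i` commute with `x_j` and `y_j`: moving `x_j` (or `y_j`)
across the product picks up the scalars `λ_{ij}` and `λ_{ji}`, whose product is `1`. Hence so does
`z_i = ⁅x_i, y_i⁆`, and then `z_i` commutes with `z_j = ⁅x_j, y_j⁆`. The relations with `x_i` and
`y_i` hold for any pair with `x y = q y x + 1`, because then `⁅x, y⁆ = (q - 1) y x + 1`. -/

theorem RingQuot.mkAlgHom_mul_eq_smul_of_rel {R A : Type*} [CommSemiring R] [Semiring A]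
    [Algebra R A] {r : A → A → Prop} {a b : A} {c : R} (h : r (a * b) (c • (b * a))) :
    mkAlgHom R r a * mkAlgHom R r b = c • (mkAlgHom R r b * mkAlgHom R r a) := by
  rw [← map_mul, mkAlgHom_rel R h, map_smul, map_mul]

section SkewCommute

variable {k A : Type*} [CommSemiring k] [Semiring A] [Algebra k A]

theorem mul_eq_smul_mul_of_mul_eq_smul_mul {a b : A} {c c' : k} (hc : c' * c = 1)
    (hba : b * a = c • (a * b)) : a * b = c' • (b * a) := by
  rw [hba, smul_smul, hc, one_smul]

theorem commute_mul_of_mul_eq_smul_mul {a b d : A} {c c' : k} (hc : c * c' = 1)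
    (had : a * d = c • (d * a)) (hbd : b * d = c' • (d * b)) : Commute (a * b) d := by
  rw [Commute, SemiconjBy, mul_assoc, hbd, mul_smul_comm, ← mul_assoc, had, smul_mul_assoc,
    smul_smul, mul_comm, hc, one_smul, mul_assoc]

end SkewCommute

section QWeylPair

variable {k A : Type*} [CommRing k] [Ring A] [Algebra k A] {x y : A} {q : k}

theorem lie_eq_sub_one_smul_mul_add_one (hxy : x * y = q • (y * x) + 1) :
    ⁅x, y⁆ = (q - 1) • (y * x) + 1 := by
  rw [Ring.lie_def, hxy]
  module

theorem smul_lie_mul_eq_mul_lie (hxy : x * y = q • (y * x) + 1) :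
    q • (⁅x, y⁆ * x) = x * ⁅x, y⁆ := by
  simp only [lie_eq_sub_one_smul_mul_add_one hxy, add_mul, mul_add, smul_mul_assoc,
    mul_smul_comm, one_mul, mul_one, ← mul_assoc, hxy]
  module

theorem lie_mul_eq_smul_mul_lie (hxy : x * y = q • (y * x) + 1) :
    ⁅x, y⁆ * y = q • (y * ⁅x, y⁆) := by
  simp only [lie_eq_sub_one_smul_mul_add_one hxy, add_mul, mul_add, smul_mul_assoc,
    mul_smul_comm, one_mul, mul_one, mul_assoc, hxy]
  module

end QWeylPair

section AJWeyl

variable {k : Type*} [Field k] {n : ℕ} {q : Fin n → k} {Λ : Fin n → Fin n → k}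

local notation "X" => ajX k n q Λ
local notation "Y" => ajY k n q Λ
local notation "Z" => ajZ k n q Λ

theorem ajZ_eq_lie (i : Fin n) : Z i = ⁅X i, Y i⁆ :=
  (Ring.lie_def _ _).symm

theorem ajX_mul_ajY_self (i : Fin n) : X i * Y i = q i • (Y i * X i) + 1 := by
  unfold ajX ajY
  rw [← map_mul, RingQuot.mkAlgHom_rel k (AJRel.xyi i), map_add, map_smul, map_mul, map_one]

variable (hΛs : ∀ i j, Λ i j * Λ j i = 1)
include hΛs

theorem ajX_mul_ajX {i j : Fin n} (h : i ≠ j) : X i * X j = Λ i j • (X j * X i) := by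
  rcases h.lt_or_gt with h | h
  · exact RingQuot.mkAlgHom_mul_eq_smul_of_rel (AJRel.xx h)
  · exact mul_eq_smul_mul_of_mul_eq_smul_mul (hΛs i j)
      (RingQuot.mkAlgHom_mul_eq_smul_of_rel (AJRel.xx h))

theorem ajY_mul_ajY {i j : Fin n} (h : i ≠ j) : Y i * Y j = Λ i j • (Y j * Y i) := by
  rcases h.lt_or_gt with h | h
  · exact RingQuot.mkAlgHom_mul_eq_smul_of_rel (AJRel.yy h)
  · exact mul_eq_smul_mul_of_mul_eq_smul_mul (hΛs i j)
      (RingQuot.mkAlgHom_mul_eq_smul_of_rel (AJRel.yy h))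

theorem ajX_mul_ajY {i j : Fin n} (h : i ≠ j) : X i * Y j = Λ j i • (Y j * X i) := by
  rcases h.lt_or_gt with h | h
  · rw [← inv_eq_of_mul_eq_one_right (hΛs i j)]
    exact RingQuot.mkAlgHom_mul_eq_smul_of_rel (AJRel.xy h)
  · have hyx : Y j * X i = Λ i j • (X i * Y j) := by
      rw [← inv_eq_of_mul_eq_one_right (hΛs j i)]
      exact RingQuot.mkAlgHom_mul_eq_smul_of_rel (AJRel.yx h)
    exact mul_eq_smul_mul_of_mul_eq_smul_mul (hΛs j i) hyx

theorem ajY_mul_ajX {i j : Fin n} (h : i ≠ j) : Y i * X j = Λ j i • (X j * Y i) := by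
  rcases h.lt_or_gt with h | h
  · rw [← inv_eq_of_mul_eq_one_right (hΛs i j)]
    exact RingQuot.mkAlgHom_mul_eq_smul_of_rel (AJRel.yx h)
  · have hxy : X j * Y i = Λ i j • (Y i * X j) := by
      rw [← inv_eq_of_mul_eq_one_right (hΛs j i)]
      exact RingQuot.mkAlgHom_mul_eq_smul_of_rel (AJRel.xy h)
    exact mul_eq_smul_mul_of_mul_eq_smul_mul (hΛs j i) hxy

theorem commute_ajZ_ajX {i j : Fin n} (h : i ≠ j) : Commute (Z i) (X j) :=
  (commute_mul_of_mul_eq_smul_mul (hΛs i j) (ajX_mul_ajX hΛs h) (ajY_mul_ajX hΛs h)).sub_left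
    (commute_mul_of_mul_eq_smul_mul (hΛs j i) (ajY_mul_ajX hΛs h) (ajX_mul_ajX hΛs h))

theorem commute_ajZ_ajY {i j : Fin n} (h : i ≠ j) : Commute (Z i) (Y j) :=
  (commute_mul_of_mul_eq_smul_mul (hΛs j i) (ajX_mul_ajY hΛs h) (ajY_mul_ajY hΛs h)).sub_left
    (commute_mul_of_mul_eq_smul_mul (hΛs i j) (ajY_mul_ajY hΛs h) (ajX_mul_ajY hΛs h))

theorem commute_ajZ_ajZ (i j : Fin n) : Commute (Z i) (Z j) := by
  rcases eq_or_ne i j with rfl | h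
  · exact Commute.refl _
  · exact ((commute_ajZ_ajX hΛs h).mul_right (commute_ajZ_ajY hΛs h)).sub_right
      ((commute_ajZ_ajY hΛs h).mul_right (commute_ajZ_ajX hΛs h))

end AJWeyl

theorem ajZ_relations_general {k : Type*} [Field k] {n : ℕ} (q : Fin n → k) (Λ : Fin n → Fin n → k)
    (hΛs : ∀ i j, Λ i j * Λ j i = 1) :
    (∀ i j : Fin n, i ≠ j →
        ajZ k n q Λ i * ajX k n q Λ j = ajX k n q Λ j * ajZ k n q Λ i ∧
        ajZ k n q Λ i * ajY k n q Λ j = ajY k n q Λ j * ajZ k n q Λ i) ∧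
    (∀ i : Fin n,
        q i • (ajZ k n q Λ i * ajX k n q Λ i) = ajX k n q Λ i * ajZ k n q Λ i ∧
        ajZ k n q Λ i * ajY k n q Λ i = q i • (ajY k n q Λ i * ajZ k n q Λ i)) ∧
    (∀ i j : Fin n, ajZ k n q Λ i * ajZ k n q Λ j = ajZ k n q Λ j * ajZ k n q Λ i) := by
  refine ⟨fun i j h => ⟨commute_ajZ_ajX hΛs h, commute_ajZ_ajY hΛs h⟩, fun i => ?_,
    commute_ajZ_ajZ hΛs⟩
  rw [ajZ_eq_lie]
  exact ⟨smul_lie_mul_eq_mul_lie (ajX_mul_ajY_self i),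
    lie_mul_eq_smul_mul_lie (ajX_mul_ajY_self i)⟩

/-- Proposition 2.2.5: the elements `z_i` of `𝒜ₙ^{q,Λ}` are normal; explicitly,
`z_i x_j = x_j z_i` and `z_i y_j = y_j z_i` for `i ≠ j`, `z_i x_i = q_i⁻¹ x_i z_i`
(i.e. `q_i • (z_i x_i) = x_i z_i`) and `z_i y_i = q_i • (y_i z_i)`, and the `z_i`
pairwise commute. -/
theorem ajZ_relations {k : Type*} [Field k] {n : ℕ} (q : Fin n → k) (Λ : Fin n → Fin n → k)
    (hq : ∀ i, q i ≠ 0) (hΛ : ∀ i j, Λ i j ≠ 0) (hΛd : ∀ i, Λ i i = 1)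
    (hΛs : ∀ i j, Λ i j * Λ j i = 1) :
    (∀ i j : Fin n, i ≠ j →
        ajZ k n q Λ i * ajX k n q Λ j = ajX k n q Λ j * ajZ k n q Λ i ∧
        ajZ k n q Λ i * ajY k n q Λ j = ajY k n q Λ j * ajZ k n q Λ i) ∧
    (∀ i : Fin n,
        q i • (ajZ k n q Λ i * ajX k n q Λ i) = ajX k n q Λ i * ajZ k n q Λ i ∧
        ajZ k n q Λ i * ajY k n q Λ i = q i • (ajY k n q Λ i * ajZ k n q Λ i)) ∧
    (∀ i j : Fin n, ajZ k n q Λ i * ajZ k n q Λ j = ajZ k n q Λ j * ajZ k n q Λ i) :=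
  ajZ_relations_general q Λ hΛs
end

section
/- Assume q_i ≠ 1 for all i. Then the elements z₁, …, zₙ of the Akhavizadegan–Jordan quantized Weyl algebra 𝒜ₙ^{q,Λ} are algebraically independent over k: the k-algebra homomorphism MvPolynomial (Fin n) k → 𝒜ₙ^{q,Λ} sending the i-th variable to z_i is injective. -/
/-! The relations make the `y_i x_i` pairwise commute, hence so do the
`z_i = (q_i - 1) y_i x_i + 1`, and `X_i ↦ z_i` is an algebra map. For injectivity let `𝒜ₙ^{q,Λ}`
act on the free module over `R = k[t₁, …, tₙ]` with basis `e_m`, `m ∈ ℤⁿ`, by weighted shifts: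
`x_i` raises `m_i` and `y_i` lowers it, with weights carrying `∏_{j > i} λ_{ij}^{m_j}` (for the
skew-commutations) and, for `y_i`, a coefficient in `t_i` solving `x_i y_i - q_i y_i x_i = 1` and
making `z_i e_0 = t_i e_0`. Then a polynomial `p` evaluated at the `z_i` sends `e_0` to
`p(t) e_0`, so it vanishes only if `p = 0`. -/

namespace Finsupp

variable {M R : Type*} [AddMonoid M] [CommSemiring R]

noncomputable def weightedShift (w : M → R) (d : M) : Module.End R (M →₀ R) :=
  lsum R fun m => w m • lsingle (m + d)

@[simp] theorem weightedShift_single (w : M → R) (d m : M) (c : R) :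
    weightedShift w d (single m c) = single (m + d) (w m * c) := by
  simp [weightedShift, smul_single]

theorem weightedShift_mul (w w' : M → R) (d d' : M) :
    weightedShift w d * weightedShift w' d' =
      weightedShift (fun m => w (m + d') * w' m) (d' + d) := by
  ext m : 2
  simp [add_assoc, mul_comm]

theorem weightedShift_add (w w' : M → R) (d : M) :
    weightedShift w d + weightedShift w' d = weightedShift (w + w') d := by
  ext m : 2
  simp

theorem smul_weightedShift {S : Type*} [CommSemiring S] [Algebra S R] (c : S) (w : M → R)
    (d : M) :
    c • weightedShift w d = weightedShift (c • w) d := by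
  ext m : 2
  simp [smul_single]

theorem weightedShift_one_zero : weightedShift (1 : M → R) 0 = 1 := by
  ext m : 2
  simp

end Finsupp

namespace MvPolynomial

variable {R A ι : Type*} [CommSemiring R] [Semiring A] [Algebra R A]

open scoped IsMulCommutative in
noncomputable def aevalOfCommute (z : ι → A) (hz : ∀ i j, Commute (z i) (z j)) :
    MvPolynomial ι R →ₐ[R] A :=
  have := Algebra.isMulCommutative_adjoin R (s := Set.range z) <| by
    rintro _ ⟨i, rfl⟩ _ ⟨j, rfl⟩
    exact hz i j
  (Algebra.adjoin R (Set.range z)).val.comp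
    (aeval fun i => ⟨z i, Algebra.subset_adjoin ⟨i, rfl⟩⟩)

@[simp] theorem aevalOfCommute_X (z : ι → A) (hz : ∀ i j, Commute (z i) (z j)) (i : ι) :
    aevalOfCommute (R := R) z hz (X i) = z i := by
  simp [aevalOfCommute]

end MvPolynomial

namespace AJWeyl

section Relations

variable {k : Type*} [Field k] {n : ℕ} (q : Fin n → k) (Λ : Fin n → Fin n → k)

theorem ajX_mul_ajX {i j : Fin n} (hij : i < j) :
    ajX k n q Λ i * ajX k n q Λ j = Λ i j • (ajX k n q Λ j * ajX k n q Λ i) := by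
  rw [ajX, ajX, ← map_mul, RingQuot.mkAlgHom_rel k (AJRel.xx hij), map_smul, map_mul]

theorem ajY_mul_ajY {i j : Fin n} (hij : i < j) :
    ajY k n q Λ i * ajY k n q Λ j = Λ i j • (ajY k n q Λ j * ajY k n q Λ i) := by
  rw [ajY, ajY, ← map_mul, RingQuot.mkAlgHom_rel k (AJRel.yy hij), map_smul, map_mul]

theorem ajX_mul_ajY {i j : Fin n} (hij : i < j) :
    ajX k n q Λ i * ajY k n q Λ j = (Λ i j)⁻¹ • (ajY k n q Λ j * ajX k n q Λ i) := by
  rw [ajX, ajY, ← map_mul, RingQuot.mkAlgHom_rel k (AJRel.xy hij), map_smul, map_mul]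

theorem ajY_mul_ajX {i j : Fin n} (hij : i < j) :
    ajY k n q Λ i * ajX k n q Λ j = (Λ i j)⁻¹ • (ajX k n q Λ j * ajY k n q Λ i) := by
  rw [ajX, ajY, ← map_mul, RingQuot.mkAlgHom_rel k (AJRel.yx hij), map_smul, map_mul]

theorem ajX_mul_ajY_self (i : Fin n) :
    ajX k n q Λ i * ajY k n q Λ i = q i • (ajY k n q Λ i * ajX k n q Λ i) + 1 := by
  rw [ajX, ajY, ← map_mul, RingQuot.mkAlgHom_rel k (AJRel.xyi i), map_add, map_smul, map_mul,
    map_one]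

theorem ajZ_eq (i : Fin n) :
    ajZ k n q Λ i = (q i - 1) • (ajY k n q Λ i * ajX k n q Λ i) + 1 := by
  rw [ajZ, ajX_mul_ajY_self]
  module

variable {Λ}

theorem commute_ajY_mul_ajX (hΛ : ∀ i j, Λ i j ≠ 0) {i j : Fin n} (hij : i < j) :
    Commute (ajY k n q Λ i * ajX k n q Λ i) (ajY k n q Λ j * ajX k n q Λ j) := by
  set X := ajX k n q Λ
  set Y := ajY k n q Λ
  have hXY : X j * Y i = Λ i j • (Y i * X j) := by
    rw [ajY_mul_ajX q Λ hij, smul_smul, mul_inv_cancel₀ (hΛ i j), one_smul]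
  have hXX : X j * X i = (Λ i j)⁻¹ • (X i * X j) := by
    rw [ajX_mul_ajX q Λ hij, smul_smul, inv_mul_cancel₀ (hΛ i j), one_smul]
  calc Y i * X i * (Y j * X j)
      = Y i * (X i * Y j) * X j := by noncomm_ring
    _ = (Λ i j)⁻¹ • ((Y i * Y j) * (X i * X j)) := by
        rw [ajX_mul_ajY q Λ hij]; simp only [mul_smul_comm, smul_mul_assoc]; noncomm_ring
    _ = Y j * Y i * (X i * X j) := by
        rw [ajY_mul_ajY q Λ hij, smul_mul_assoc, smul_smul, inv_mul_cancel₀ (hΛ i j), one_smul]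
    _ = Λ i j • ((Y j * Y i) * (X j * X i)) := by
        rw [hXX, mul_smul_comm, smul_smul, mul_inv_cancel₀ (hΛ i j), one_smul]
    _ = Y j * X j * (Y i * X i) := by
        rw [show Y j * X j * (Y i * X i) = Y j * (X j * Y i) * X i by noncomm_ring, hXY]
        simp only [mul_smul_comm, smul_mul_assoc]; noncomm_ring

theorem ajZ_commute (hΛ : ∀ i j, Λ i j ≠ 0) (i j : Fin n) :
    Commute (ajZ k n q Λ i) (ajZ k n q Λ j) := by
  have key : ∀ {i j : Fin n}, i < j → Commute (ajZ k n q Λ i) (ajZ k n q Λ j) := fun hij => by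
    rw [ajZ_eq, ajZ_eq]
    exact (((commute_ajY_mul_ajX q hΛ hij).smul_left _).smul_right _ |>.add_right
      (Commute.one_right _)).add_left (Commute.one_left _)
  rcases lt_trichotomy i j with h | rfl | h
  exacts [key h, Commute.refl _, (key h).symm]

end Relations

section ShiftRepresentation

open Finsupp MvPolynomial

variable {k : Type*} [Field k] {n : ℕ}

def twist (Λ : Fin n → Fin n → k) (i : Fin n) (m : Fin n → ℤ) : k :=
  ∏ j ∈ Finset.Ioi i, Λ i j ^ m j

theorem twist_zero (Λ : Fin n → Fin n → k) (i : Fin n) : twist Λ i 0 = 1 := by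
  simp [twist]

theorem twist_add {Λ : Fin n → Fin n → k} (hΛ : ∀ i j, Λ i j ≠ 0) (i : Fin n)
    (m m' : Fin n → ℤ) :
    twist Λ i (m + m') = twist Λ i m * twist Λ i m' := by
  simp only [twist, Pi.add_apply, ← Finset.prod_mul_distrib, zpow_add₀ (hΛ _ _)]

theorem twist_single (Λ : Fin n → Fin n → k) (i l : Fin n) (t : ℤ) :
    twist Λ i (Pi.single l t) = if i < l then Λ i l ^ t else 1 := by
  have off : ∀ j ≠ l, Λ i j ^ (Pi.single l t : Fin n → ℤ) j = 1 := fun j hj => by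
    simp [Pi.single_eq_of_ne hj]
  split_ifs with h
  · rw [twist, Finset.prod_eq_single_of_mem l (Finset.mem_Ioi.2 h) fun j _ hj => off j hj,
      Pi.single_eq_same]
  · exact Finset.prod_eq_one fun j hj => off j (ne_of_mem_of_not_mem hj (by simpa using h))

theorem twist_ne_zero {Λ : Fin n → Fin n → k} (hΛ : ∀ i j, Λ i j ≠ 0) (i : Fin n)
    (m : Fin n → ℤ) : twist Λ i m ≠ 0 :=
  Finset.prod_ne_zero_iff.2 fun j _ => zpow_ne_zero _ (hΛ i j)

variable {R : Type*} [CommRing R] [Algebra k R]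

theorem algebraMap_inv_sub_one_mul {a : k} (ha : a ≠ 1) :
    algebraMap k R (a - 1)⁻¹ * (algebraMap k R a - 1) = 1 := by
  rw [← map_one (algebraMap k R), ← map_sub, ← map_mul, inv_mul_cancel₀ (sub_ne_zero.2 ha)]

/-- The solution of `u t = q_i u (t + 1) + 1` with `u 0 - u 1 = γ_i`: this makes
`x_i y_i - q_i y_i x_i` act as `1` and `z_i` act on `e_0` as `γ_i`. -/
def lowerCoeff (q : Fin n → k) (γ : Fin n → R) (i : Fin n) (t : ℤ) : R :=
  algebraMap k R (q i - 1)⁻¹ * (algebraMap k R (q i ^ (1 - t)) * γ i - 1)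

theorem lowerCoeff_eq_smul_add_one {q : Fin n → k} (hq : ∀ i, q i ≠ 0) (hq1 : ∀ i, q i ≠ 1)
    (γ : Fin n → R) (i : Fin n) (t : ℤ) :
    lowerCoeff q γ i t = q i • lowerCoeff q γ i (t + 1) + 1 := by
  have hpow : q i ^ (1 - t) = q i * q i ^ (1 - (t + 1)) := by
    rw [← zpow_one_add₀ (hq i)]; ring_nf
  simp only [lowerCoeff, hpow, map_mul, Algebra.smul_def]
  linear_combination algebraMap_inv_sub_one_mul (R := R) (hq1 i)

theorem sub_one_smul_lowerCoeff_one_add_one {q : Fin n → k} (hq1 : ∀ i, q i ≠ 1)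
    (γ : Fin n → R) (i : Fin n) : (q i - 1) • lowerCoeff q γ i 1 + 1 = γ i := by
  simp only [lowerCoeff, sub_self, zpow_zero, map_one, one_mul, Algebra.smul_def, map_sub]
  linear_combination (γ i - 1) * algebraMap_inv_sub_one_mul (R := R) (hq1 i)

theorem single_add_single_neg (i : Fin n) (t : ℤ) :
    (Pi.single i t + Pi.single i (-t) : Fin n → ℤ) = 0 := by
  rw [← Pi.single_add, add_neg_cancel, Pi.single_zero]

variable (Λ : Fin n → Fin n → k) (q : Fin n → k) (γ : Fin n → R)

noncomputable def xOp (i : Fin n) : Module.End R ((Fin n → ℤ) →₀ R) :=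
  weightedShift (fun m => algebraMap k R (twist Λ i m)) (Pi.single i 1)

noncomputable def yOp (i : Fin n) : Module.End R ((Fin n → ℤ) →₀ R) :=
  weightedShift (fun m => algebraMap k R (twist Λ i m)⁻¹ * lowerCoeff q γ i (m i))
    (Pi.single i (-1))

variable {Λ q}

theorem xOp_mul_xOp (hΛ : ∀ i j, Λ i j ≠ 0) {i j : Fin n} (hij : i < j) :
    xOp (R := R) Λ i * xOp Λ j = Λ i j • (xOp Λ j * xOp Λ i) := by
  simp only [xOp, weightedShift_mul, smul_weightedShift]
  congr 1
  · funext m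
    simp only [twist_add hΛ, twist_single, hij, hij.not_gt, if_true, if_false, zpow_one, mul_one,
      map_mul, Pi.smul_apply, Algebra.smul_def]
    ring
  · exact add_comm _ _

theorem yOp_mul_yOp (hΛ : ∀ i j, Λ i j ≠ 0) {i j : Fin n} (hij : i < j) :
    yOp Λ q γ i * yOp Λ q γ j = Λ i j • (yOp Λ q γ j * yOp Λ q γ i) := by
  simp only [yOp, weightedShift_mul, smul_weightedShift]
  congr 1
  · funext m
    simp only [twist_add hΛ, twist_single, hij, hij.not_gt, if_true, if_false, zpow_neg, zpow_one,
      mul_one, mul_inv, inv_inv, Pi.add_apply, Pi.single_eq_of_ne hij.ne,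
      Pi.single_eq_of_ne hij.ne', add_zero, map_mul, Pi.smul_apply, Algebra.smul_def]
    ring
  · exact add_comm _ _

theorem xOp_mul_yOp (hΛ : ∀ i j, Λ i j ≠ 0) {i j : Fin n} (hij : i < j) :
    xOp Λ i * yOp Λ q γ j = (Λ i j)⁻¹ • (yOp Λ q γ j * xOp Λ i) := by
  simp only [xOp, yOp, weightedShift_mul, smul_weightedShift]
  congr 1
  · funext m
    simp only [twist_add hΛ, twist_single, hij, hij.not_gt, if_true, if_false, zpow_neg, zpow_one,
      mul_one, Pi.add_apply, Pi.single_eq_of_ne hij.ne', add_zero, map_mul, Pi.smul_apply,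
      Algebra.smul_def]
    ring
  · exact add_comm _ _

theorem yOp_mul_xOp (hΛ : ∀ i j, Λ i j ≠ 0) {i j : Fin n} (hij : i < j) :
    yOp Λ q γ i * xOp Λ j = (Λ i j)⁻¹ • (xOp Λ j * yOp Λ q γ i) := by
  simp only [xOp, yOp, weightedShift_mul, smul_weightedShift]
  congr 1
  · funext m
    simp only [twist_add hΛ, twist_single, hij, hij.not_gt, if_true, if_false, zpow_neg, zpow_one,
      mul_one, mul_inv, Pi.add_apply, Pi.single_eq_of_ne hij.ne, add_zero, map_mul, Pi.smul_apply,
      Algebra.smul_def]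
    ring
  · exact add_comm _ _

theorem xOp_mul_yOp_self (hq : ∀ i, q i ≠ 0) (hq1 : ∀ i, q i ≠ 1) (hΛ : ∀ i j, Λ i j ≠ 0)
    (i : Fin n) : xOp Λ i * yOp Λ q γ i = q i • (yOp Λ q γ i * xOp Λ i) + 1 := by
  have hshift : (Pi.single i (-1) + Pi.single i 1 : Fin n → ℤ) = 0 := by
    simpa using single_add_single_neg i (-1)
  simp only [xOp, yOp, weightedShift_mul, smul_weightedShift, hshift, single_add_single_neg,
    ← weightedShift_one_zero, weightedShift_add]
  congr 1
  funext m
  have hinv : algebraMap k R (twist Λ i m) * algebraMap k R (twist Λ i m)⁻¹ = 1 := by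
    rw [← map_mul, mul_inv_cancel₀ (twist_ne_zero hΛ i m), map_one]
  simp only [twist_add hΛ, twist_single, lt_irrefl, if_false, mul_one, Pi.add_apply,
    Pi.single_eq_same, Pi.smul_apply, Pi.one_apply]
  rw [lowerCoeff_eq_smul_add_one hq hq1]
  simp only [Algebra.smul_def]
  linear_combination hinv

variable (hq : ∀ i, q i ≠ 0) (hq1 : ∀ i, q i ≠ 1) (hΛ : ∀ i j, Λ i j ≠ 0)

noncomputable def shiftRep : AJWeyl k n q Λ →ₐ[k] Module.End R ((Fin n → ℤ) →₀ R) :=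
  RingQuot.liftAlgHom k ⟨FreeAlgebra.lift k (Sum.elim (xOp Λ) (yOp Λ q γ)), fun _ _ r => by
    induction r with
    | xx h => simpa [fX] using xOp_mul_xOp hΛ h
    | yy h => simpa [fY] using yOp_mul_yOp γ hΛ h
    | xy h => simpa [fX, fY] using xOp_mul_yOp γ hΛ h
    | yx h => simpa [fX, fY] using yOp_mul_xOp γ hΛ h
    | xyi i => simpa [fX, fY] using xOp_mul_yOp_self γ hq hq1 hΛ i⟩

theorem shiftRep_ajX (i : Fin n) : shiftRep γ hq hq1 hΛ (ajX k n q Λ i) = xOp Λ i := by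
  simp [shiftRep, ajX, fX]

theorem shiftRep_ajY (i : Fin n) : shiftRep γ hq hq1 hΛ (ajY k n q Λ i) = yOp Λ q γ i := by
  simp [shiftRep, ajY, fY]

theorem shiftRep_ajZ_single_zero (i : Fin n) (c : R) :
    shiftRep γ hq hq1 hΛ (ajZ k n q Λ i) (single 0 c) = single 0 (γ i * c) := by
  rw [ajZ_eq, map_add, map_smul, map_mul, map_one, shiftRep_ajX, shiftRep_ajY, xOp, yOp,
    weightedShift_mul, smul_weightedShift, LinearMap.add_apply, weightedShift_single,
    Module.End.one_apply, single_add_single_neg, zero_add, ← single_add,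
    ← sub_one_smul_lowerCoeff_one_add_one hq1 γ i]
  congr 1
  simp [twist_single, twist_zero, Algebra.smul_def, add_mul, mul_assoc]

theorem shiftRep_aevalOfCommute_single_zero (p : MvPolynomial (Fin n) k) :
    shiftRep γ hq hq1 hΛ (aevalOfCommute (ajZ k n q Λ) (ajZ_commute q hΛ) p) (single 0 1) =
      single 0 (aeval γ p) := by
  induction p using MvPolynomial.induction_on with
  | C a => simp [Algebra.algebraMap_eq_smul_one, smul_single]
  | add p p' hp hp' => simp [hp, hp']
  | mul_X p i hp =>
    rw [map_mul, aevalOfCommute_X, map_mul, Module.End.mul_apply, shiftRep_ajZ_single_zero,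
      ← smul_eq_mul, ← smul_single, map_smul, hp, smul_single, map_mul, aeval_X, smul_eq_mul,
      mul_comm]

end ShiftRepresentation

end AJWeyl

theorem ajZ_algebraically_independent_general {k : Type*} [Field k] {n : ℕ}
    (q : Fin n → k) (Λ : Fin n → Fin n → k)
    (hq : ∀ i, q i ≠ 0) (hq1 : ∀ i, q i ≠ 1) (hΛ : ∀ i j, Λ i j ≠ 0) :
    ∃ F : MvPolynomial (Fin n) k →ₐ[k] AJWeyl k n q Λ,
      (∀ i : Fin n, F (MvPolynomial.X i) = ajZ k n q Λ i) ∧ Function.Injective F := by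
  refine ⟨MvPolynomial.aevalOfCommute (ajZ k n q Λ) (AJWeyl.ajZ_commute q hΛ),
    MvPolynomial.aevalOfCommute_X _ _, (injective_iff_map_eq_zero _).2 fun p hp => ?_⟩
  have h := AJWeyl.shiftRep_aevalOfCommute_single_zero
    (MvPolynomial.X : Fin n → MvPolynomial (Fin n) k) hq hq1 hΛ p
  rwa [hp, map_zero, LinearMap.zero_apply, eq_comm, Finsupp.single_eq_zero,
    MvPolynomial.aeval_X_left_apply] at h

/-- Proposition 2.2.7 (first part): if no `q_i` equals `1`, the elements `z₁, …, zₙ` of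
`𝒜ₙ^{q,Λ}` are algebraically independent over `k`: the `k`-algebra homomorphism from
`MvPolynomial (Fin n) k` sending the `i`-th variable to `z_i` is injective. -/
theorem ajZ_algebraically_independent {k : Type*} [Field k] {n : ℕ} (hn : 0 < n)
    (q : Fin n → k) (Λ : Fin n → Fin n → k)
    (hq : ∀ i, q i ≠ 0) (hq1 : ∀ i, q i ≠ 1) (hΛ : ∀ i j, Λ i j ≠ 0) (hΛd : ∀ i, Λ i i = 1)
    (hΛs : ∀ i j, Λ i j * Λ j i = 1) :
    ∃ F : MvPolynomial (Fin n) k →ₐ[k] AJWeyl k n q Λ,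
      (∀ i : Fin n, F (MvPolynomial.X i) = ajZ k n q Λ i) ∧ Function.Injective F :=
  ajZ_algebraically_independent_general q Λ hq hq1 hΛ
end

section
/- In the Maltsiniotis quantized Weyl algebra Aₙ^{q,Λ}, the elements z_i = x_i y_i − y_i x_i satisfy: z_i x_j = x_j z_i and z_i y_j = y_j z_i whenever i < j; q_j · (z_i x_j) = x_j z_i (equivalently z_i x_j = q_j^{-1} x_j z_i) and z_i y_j = q_j · (y_j z_i) whenever j ≤ i; and z_i z_j = z_j z_i for all i, j. In particular each z_i is a normal element of Aₙ^{q,Λ}. -/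
/-- The defining relations of the Maltsiniotis quantized Weyl algebra. -/
inductive MRel (k : Type*) [Field k] (n : ℕ) (q : Fin n → k) (Λ : Fin n → Fin n → k) :
    FreeAlgebra k (Fin n ⊕ Fin n) → FreeAlgebra k (Fin n ⊕ Fin n) → Prop
  | xx {i j : Fin n} : i < j →
      MRel k n q Λ (fX k n i * fX k n j) ((Λ i j * q i) • (fX k n j * fX k n i))
  | yy {i j : Fin n} : i < j →
      MRel k n q Λ (fY k n i * fY k n j) (Λ i j • (fY k n j * fY k n i))
  | xy {i j : Fin n} : i < j →
      MRel k n q Λ (fX k n i * fY k n j) ((Λ i j)⁻¹ • (fY k n j * fX k n i))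
  | yx {i j : Fin n} : i < j →
      MRel k n q Λ (fY k n i * fX k n j) (((Λ i j)⁻¹ * (q i)⁻¹) • (fX k n j * fY k n i))
  | xyi (i : Fin n) :
      MRel k n q Λ (fX k n i * fY k n i)
        (q i • (fY k n i * fX k n i) + (1 +
          ∑ j ∈ Finset.univ.filter (fun j => j < i), (q j - 1) • (fY k n j * fX k n j)))

/-- The Maltsiniotis quantized Weyl algebra `Aₙ^{q,Λ}`. -/
abbrev MWeyl (k : Type*) [Field k] (n : ℕ) (q : Fin n → k) (Λ : Fin n → Fin n → k) :=
  RingQuot (MRel k n q Λ)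

/-- The generator `x_i` of `Aₙ^{q,Λ}`. -/
def mX (k : Type*) [Field k] (n : ℕ) (q : Fin n → k) (Λ : Fin n → Fin n → k) (i : Fin n) :
    MWeyl k n q Λ :=
  RingQuot.mkAlgHom k (MRel k n q Λ) (fX k n i)

/-- The generator `y_i` of `Aₙ^{q,Λ}`. -/
def mY (k : Type*) [Field k] (n : ℕ) (q : Fin n → k) (Λ : Fin n → Fin n → k) (i : Fin n) :
    MWeyl k n q Λ :=
  RingQuot.mkAlgHom k (MRel k n q Λ) (fY k n i)

/-- The element `z_i = x_i y_i - y_i x_i` of `Aₙ^{q,Λ}`. -/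
def mZ (k : Type*) [Field k] (n : ℕ) (q : Fin n → k) (Λ : Fin n → Fin n → k) (i : Fin n) :
    MWeyl k n q Λ :=
  mX k n q Λ i * mY k n q Λ i - mY k n q Λ i * mX k n q Λ i

/- Write `w_j = y_j x_j`, so that `z_i = 1 + ∑_{j ≤ i} (q_j - 1) w_j`. A single `w_j` commutes
with `x_m` and `y_m` for `j < m`, and `q_m`-commutes with them for `m < j`. For `j = m`, the
relation `x_m y_m = q_m w_m + c_m`, with `c_m = 1 + ∑_{j < m} (q_j - 1) w_j` commuting with `x_m`
and `y_m`, yields `x_m z_m = q_m z_m x_m` and `z_m y_m = q_m y_m z_m`. Since `z_i` passes `x_l`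
and `y_l` with inverse factors, it commutes with every `w_l`, hence with every `z_j`. -/

theorem commute_mul_of_skew {k A : Type*} [CommSemiring k] [Semiring A] [Algebra k A]
    {a x y : A} (c : k) (hy : a * y = c • (y * a)) (hx : c • (a * x) = x * a) :
    Commute a (y * x) := by
  calc a * (y * x) = c • (y * (a * x)) := by rw [← mul_assoc, hy, smul_mul_assoc, mul_assoc]
    _ = y * x * a := by rw [← mul_smul_comm, hx, mul_assoc]

section MaltsiniotisWeyl

variable {k : Type*} [Field k] {n : ℕ} {q : Fin n → k} {Λ : Fin n → Fin n → k}

local notation "X" => mX k n q Λ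
local notation "Y" => mY k n q Λ

variable (q Λ) in
def mWSum (s : Finset (Fin n)) : MWeyl k n q Λ :=
  ∑ j ∈ s, (q j - 1) • (mY k n q Λ j * mX k n q Λ j)

theorem mX_mul_mX_of_lt {i j : Fin n} (h : i < j) :
    X i * X j = (Λ i j * q i) • (X j * X i) := by
  simpa [mX] using RingQuot.mkAlgHom_rel k (MRel.xx (q := q) (Λ := Λ) h)

theorem mY_mul_mY_of_lt {i j : Fin n} (h : i < j) :
    Y i * Y j = Λ i j • (Y j * Y i) := by
  simpa [mY] using RingQuot.mkAlgHom_rel k (MRel.yy (q := q) (Λ := Λ) h)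

theorem mX_mul_mY_of_lt {i j : Fin n} (h : i < j) :
    X i * Y j = (Λ i j)⁻¹ • (Y j * X i) := by
  simpa [mX, mY] using RingQuot.mkAlgHom_rel k (MRel.xy (q := q) (Λ := Λ) h)

theorem mY_mul_mX_of_lt {i j : Fin n} (h : i < j) :
    Y i * X j = ((Λ i j)⁻¹ * (q i)⁻¹) • (X j * Y i) := by
  simpa [mX, mY] using RingQuot.mkAlgHom_rel k (MRel.yx (q := q) (Λ := Λ) h)

theorem mX_mul_mY_self (i : Fin n) :
    X i * Y i = q i • (Y i * X i) + (1 + mWSum q Λ (Finset.Iio i)) := by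
  simpa [mX, mY, mWSum, Finset.filter_gt_eq_Iio] using
    RingQuot.mkAlgHom_rel k (MRel.xyi (q := q) (Λ := Λ) i)

theorem mZ_eq_smul_add (i : Fin n) :
    mZ k n q Λ i = (q i - 1) • (Y i * X i) + (1 + mWSum q Λ (Finset.Iio i)) := by
  rw [mZ, mX_mul_mY_self]
  module

theorem mZ_eq_one_add_mWSum (i : Fin n) : mZ k n q Λ i = 1 + mWSum q Λ (Finset.Iic i) := by
  rw [mZ_eq_smul_add, mWSum, mWSum, ← Finset.Iio_insert, Finset.sum_insert Finset.notMem_Iio_self]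
  abel

theorem mZ_eq_mZ_add_mWSum {m i : Fin n} (h : m ≤ i) :
    mZ k n q Λ i = mZ k n q Λ m + mWSum q Λ (Finset.Ioc m i) := by
  rw [mZ_eq_one_add_mWSum, mZ_eq_one_add_mWSum, add_assoc, mWSum, mWSum, mWSum,
    ← Finset.sum_union (Finset.Iic_disjoint_Ioc le_rfl), Finset.Iic_union_Ioc_eq_Iic h]

theorem commute_mW_mX_of_lt {j m : Fin n} (hq : q j ≠ 0) (hΛ : Λ j m ≠ 0) (h : j < m) :
    Commute (Y j * X j) (X m) := by
  calc Y j * X j * X m = (Λ j m * q j) • (Y j * X m * X j) := by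
        rw [mul_assoc, mX_mul_mX_of_lt h, mul_smul_comm, mul_assoc]
    _ = (Λ j m * q j * ((Λ j m)⁻¹ * (q j)⁻¹)) • (X m * (Y j * X j)) := by
        rw [mY_mul_mX_of_lt h, smul_mul_assoc, smul_smul, mul_assoc (X m)]
    _ = X m * (Y j * X j) := by
        rw [show Λ j m * q j * ((Λ j m)⁻¹ * (q j)⁻¹) = 1 by field_simp, one_smul]

theorem commute_mW_mY_of_lt {j m : Fin n} (hΛ : Λ j m ≠ 0) (h : j < m) :
    Commute (Y j * X j) (Y m) := by
  calc Y j * X j * Y m = (Λ j m)⁻¹ • (Y j * Y m * X j) := by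
        rw [mul_assoc, mX_mul_mY_of_lt h, mul_smul_comm, mul_assoc]
    _ = Y m * (Y j * X j) := by
        rw [mY_mul_mY_of_lt h, smul_mul_assoc, smul_smul, inv_mul_cancel₀ hΛ, one_smul, mul_assoc]

theorem smul_mW_mul_mX_of_lt {m j : Fin n} (hΛ : Λ m j ≠ 0) (h : m < j) :
    q m • (Y j * X j * X m) = X m * (Y j * X j) := by
  symm
  calc X m * (Y j * X j) = (Λ m j)⁻¹ • (Y j * (X m * X j)) := by
        rw [← mul_assoc, mX_mul_mY_of_lt h, smul_mul_assoc, mul_assoc]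
    _ = q m • (Y j * X j * X m) := by
        rw [mX_mul_mX_of_lt h, mul_smul_comm, smul_smul, inv_mul_cancel_left₀ hΛ, mul_assoc]

theorem smul_mY_mul_mW_of_lt {m j : Fin n} (hq : q m ≠ 0) (hΛ : Λ m j ≠ 0) (h : m < j) :
    q m • (Y m * (Y j * X j)) = Y j * X j * Y m := by
  calc q m • (Y m * (Y j * X j)) = (q m * Λ m j) • (Y j * (Y m * X j)) := by
        rw [← mul_assoc, mY_mul_mY_of_lt h, smul_mul_assoc, smul_smul, mul_assoc]
    _ = (q m * Λ m j * ((Λ m j)⁻¹ * (q m)⁻¹)) • (Y j * X j * Y m) := by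
        rw [mY_mul_mX_of_lt h, mul_smul_comm, smul_smul, ← mul_assoc (Y j)]
    _ = Y j * X j * Y m := by
        rw [show q m * Λ m j * ((Λ m j)⁻¹ * (q m)⁻¹) = 1 by field_simp, one_smul]

variable (hq : ∀ i, q i ≠ 0) (hΛ : ∀ i j, Λ i j ≠ 0)
include hq hΛ

theorem commute_one_add_mWSum_mX {s : Finset (Fin n)} {m : Fin n} (hs : ∀ j ∈ s, j < m) :
    Commute (1 + mWSum q Λ s) (X m) :=
  (Commute.one_left _).add_left <| Commute.sum_left _ _ _ fun j hj =>
    (commute_mW_mX_of_lt (hq j) (hΛ j m) (hs j hj)).smul_left _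

omit hq in
theorem commute_one_add_mWSum_mY {s : Finset (Fin n)} {m : Fin n} (hs : ∀ j ∈ s, j < m) :
    Commute (1 + mWSum q Λ s) (Y m) :=
  (Commute.one_left _).add_left <| Commute.sum_left _ _ _ fun j hj =>
    (commute_mW_mY_of_lt (hΛ j m) (hs j hj)).smul_left _

omit hq in
theorem smul_mWSum_mul_mX {s : Finset (Fin n)} {m : Fin n} (hs : ∀ j ∈ s, m < j) :
    q m • (mWSum q Λ s * X m) = X m * mWSum q Λ s := by
  simp only [mWSum, Finset.sum_mul, Finset.mul_sum, Finset.smul_sum]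
  refine Finset.sum_congr rfl fun j hj => ?_
  rw [smul_mul_assoc, smul_comm, mul_smul_comm, smul_mW_mul_mX_of_lt (hΛ m j) (hs j hj)]

theorem smul_mY_mul_mWSum {s : Finset (Fin n)} {m : Fin n} (hs : ∀ j ∈ s, m < j) :
    q m • (Y m * mWSum q Λ s) = mWSum q Λ s * Y m := by
  simp only [mWSum, Finset.sum_mul, Finset.mul_sum, Finset.smul_sum]
  refine Finset.sum_congr rfl fun j hj => ?_
  rw [mul_smul_comm, smul_comm, smul_mul_assoc, smul_mY_mul_mW_of_lt (hq m) (hΛ m j) (hs j hj)]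

theorem commute_mZ_mX_of_lt {i m : Fin n} (h : i < m) : Commute (mZ k n q Λ i) (X m) := by
  rw [mZ_eq_one_add_mWSum]
  exact commute_one_add_mWSum_mX hq hΛ fun j hj => (Finset.mem_Iic.1 hj).trans_lt h

omit hq in
theorem commute_mZ_mY_of_lt {i m : Fin n} (h : i < m) : Commute (mZ k n q Λ i) (Y m) := by
  rw [mZ_eq_one_add_mWSum]
  exact commute_one_add_mWSum_mY hΛ fun j hj => (Finset.mem_Iic.1 hj).trans_lt h

theorem smul_mZ_mul_mX_self (m : Fin n) : q m • (mZ k n q Λ m * X m) = X m * mZ k n q Λ m := by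
  rw [mZ_eq_smul_add]
  set c := 1 + mWSum q Λ (Finset.Iio m)
  have hc : Commute c (X m) := commute_one_add_mWSum_mX hq hΛ fun _ => Finset.mem_Iio.1
  calc q m • (((q m - 1) • (Y m * X m) + c) * X m)
        = (q m - 1) • ((q m • (Y m * X m) + c) * X m) + c * X m := by
        simp only [add_mul, smul_mul_assoc]
        module
    _ = X m * ((q m - 1) • (Y m * X m) + c) := by
        rw [← mX_mul_mY_self, hc.eq]
        simp only [mul_add, mul_smul_comm, mul_assoc]

omit hq in
theorem mZ_mul_mY_self (m : Fin n) : mZ k n q Λ m * Y m = q m • (Y m * mZ k n q Λ m) := by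
  rw [mZ_eq_smul_add]
  set c := 1 + mWSum q Λ (Finset.Iio m)
  have hc : Commute c (Y m) := commute_one_add_mWSum_mY hΛ fun _ => Finset.mem_Iio.1
  calc ((q m - 1) • (Y m * X m) + c) * Y m
        = (q m - 1) • (Y m * (q m • (Y m * X m) + c)) + Y m * c := by
        rw [← mX_mul_mY_self, ← hc.eq]
        simp only [add_mul, smul_mul_assoc, mul_assoc]
    _ = q m • (Y m * ((q m - 1) • (Y m * X m) + c)) := by
        simp only [mul_add, mul_smul_comm]
        module

theorem smul_mZ_mul_mX_of_le {m i : Fin n} (h : m ≤ i) :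
    q m • (mZ k n q Λ i * X m) = X m * mZ k n q Λ i := by
  rw [mZ_eq_mZ_add_mWSum h, add_mul, mul_add, smul_add, smul_mZ_mul_mX_self hq hΛ,
    smul_mWSum_mul_mX hΛ fun j hj => (Finset.mem_Ioc.1 hj).1]

theorem mZ_mul_mY_of_le {m i : Fin n} (h : m ≤ i) :
    mZ k n q Λ i * Y m = q m • (Y m * mZ k n q Λ i) := by
  rw [mZ_eq_mZ_add_mWSum h, add_mul, mul_add, smul_add, mZ_mul_mY_self hΛ,
    smul_mY_mul_mWSum hq hΛ fun j hj => (Finset.mem_Ioc.1 hj).1]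

theorem commute_mZ_mW (i l : Fin n) : Commute (mZ k n q Λ i) (Y l * X l) := by
  rcases le_or_gt l i with hle | hlt
  · exact commute_mul_of_skew (q l) (mZ_mul_mY_of_le hq hΛ hle) (smul_mZ_mul_mX_of_le hq hΛ hle)
  · exact (commute_mZ_mY_of_lt hΛ hlt).mul_right (commute_mZ_mX_of_lt hq hΛ hlt)

theorem commute_mZ_mZ (i j : Fin n) : Commute (mZ k n q Λ i) (mZ k n q Λ j) := by
  rw [mZ_eq_one_add_mWSum j]
  exact (Commute.one_right _).add_right <| Commute.sum_right _ _ _ fun l _ =>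
    (commute_mZ_mW hq hΛ i l).smul_right _

end MaltsiniotisWeyl

theorem mZ_relations_general {k : Type*} [Field k] {n : ℕ} (q : Fin n → k) (Λ : Fin n → Fin n → k)
    (hq : ∀ i, q i ≠ 0) (hΛ : ∀ i j, Λ i j ≠ 0) :
    (∀ i j : Fin n, i < j →
        mZ k n q Λ i * mX k n q Λ j = mX k n q Λ j * mZ k n q Λ i ∧
        mZ k n q Λ i * mY k n q Λ j = mY k n q Λ j * mZ k n q Λ i) ∧
    (∀ i j : Fin n, j ≤ i →
        q j • (mZ k n q Λ i * mX k n q Λ j) = mX k n q Λ j * mZ k n q Λ i ∧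
        mZ k n q Λ i * mY k n q Λ j = q j • (mY k n q Λ j * mZ k n q Λ i)) ∧
    (∀ i j : Fin n, mZ k n q Λ i * mZ k n q Λ j = mZ k n q Λ j * mZ k n q Λ i) :=
  ⟨fun _ _ h => ⟨commute_mZ_mX_of_lt hq hΛ h, commute_mZ_mY_of_lt hΛ h⟩,
    fun _ _ h => ⟨smul_mZ_mul_mX_of_le hq hΛ h, mZ_mul_mY_of_le hq hΛ h⟩,
    fun i j => commute_mZ_mZ hq hΛ i j⟩

/-- Proposition 2.1.4: the elements `z_i` of the Maltsiniotis quantized Weyl algebra are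
normal; explicitly `z_i x_j = x_j z_i` and `z_i y_j = y_j z_i` for `i < j`,
`z_i x_j = q_j⁻¹ x_j z_i` (i.e. `q_j • (z_i x_j) = x_j z_i`) and `z_i y_j = q_j • (y_j z_i)`
for `j ≤ i`, and the `z_i` pairwise commute. -/
theorem mZ_relations {k : Type*} [Field k] {n : ℕ} (q : Fin n → k) (Λ : Fin n → Fin n → k)
    (hq : ∀ i, q i ≠ 0) (hΛ : ∀ i j, Λ i j ≠ 0) (hΛd : ∀ i, Λ i i = 1)
    (hΛs : ∀ i j, Λ i j * Λ j i = 1) :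
    (∀ i j : Fin n, i < j →
        mZ k n q Λ i * mX k n q Λ j = mX k n q Λ j * mZ k n q Λ i ∧
        mZ k n q Λ i * mY k n q Λ j = mY k n q Λ j * mZ k n q Λ i) ∧
    (∀ i j : Fin n, j ≤ i →
        q j • (mZ k n q Λ i * mX k n q Λ j) = mX k n q Λ j * mZ k n q Λ i ∧
        mZ k n q Λ i * mY k n q Λ j = q j • (mY k n q Λ j * mZ k n q Λ i)) ∧
    (∀ i j : Fin n, mZ k n q Λ i * mZ k n q Λ j = mZ k n q Λ j * mZ k n q Λ i) :=
  mZ_relations_general q Λ hq hΛ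
end
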